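/- (Oscillators with damping: exponential instability of the time-reversed flow.) Let j ≥ 3, M := E₁₁ + Tri_j(1,0,−1) (the j×j matrix with 1 in the (1,1) entry, 1 on the subdiagonal, −1 on the superdiagonal, 0 elsewhere). Define b_i := log(i+1) for i = 2, …, j+1, a₁ := Σ_{i=2}^{j} b_i, a₀ := a₁ + a₁²/(2 log 2) + b₂ + b_j − b_{j+1}/2 − b_{j−1}/2, r_j := (b_j − b_{j+1}/2 − b_{j−1}/2) / (a₀ + 2 Σ_{i=2}^{j} b_i), and c_j := (a₀/2 − Σ_{i=2}^{j} b_i) / (a₀/2 + Σ_{i=2}^{j} b_i). Then for every x ∈ ℝʲ and every t ≥ 0: ‖e^{tM} x‖² ≥ c_j e^{r_j t} ‖x‖²; consequently, with A̲ := Tri_j(1,0,−1) − E₁₁, for every t ≥ 0: ∫₀^t ‖e^{−v A̲ᵀ} x‖² dv ≥ ‖x‖² (c_j / r_j)(e^{r_j t} − 1). -/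

import Mathlib

/-!
Along `y(t) = e^{tM} x` consider the Lyapunov function
`V(y) = (a₀/2) ‖y‖² − Σ_{m=2}^{j} b_m Σ_{k<m−1} y_k y_{k+1}`.
The tridiagonal part of `M` is skew, so `d/dt ‖y‖² = 2 y₀²`, and every inner chain sum has a
telescoping derivative; hence `V̇ = a₀ y₀² − Σ_m b_m (y₀² + y₀ y₁ − y_{m−1}² − y_{m−2} y_m)`.
AM-GM on the products, together with the fact that the concavity defect
`b_m − (b_{m+1} + b_{m−1})/2` of the logarithm decreases in `m`, gives `V̇ ≥ ρ ‖y‖²` with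
`ρ = b_j − b_{j+1}/2 − b_{j−1}/2`. Since the cross part of `V` is bounded by `(Σ b_m) ‖y‖²`,
`V` lies between `(a₀/2 ∓ Σ b_m) ‖y‖²`, so `V̇ ≥ r_j V`; Grönwall gives the pointwise bound, and
integrating it gives the second.
-/

open Matrix

noncomputable section

/-- Tri_j(1,0,−1): the j×j tridiagonal matrix with 1 on the subdiagonal and −1 on the
superdiagonal. -/
def triJ (j : ℕ) : Matrix (Fin j) (Fin j) ℝ :=
  Matrix.of fun i m =>
    if (i : ℕ) = (m : ℕ) + 1 then 1 else if (m : ℕ) = (i : ℕ) + 1 then -1 else 0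

/-- E₁₁: the j×j matrix with 1 in the (1,1) entry and 0 elsewhere. -/
def e11 (j : ℕ) : Matrix (Fin j) (Fin j) ℝ :=
  Matrix.of fun i m => if (i : ℕ) = 0 ∧ (m : ℕ) = 0 then 1 else 0

/-- b_i = log(i+1) -/
def bI (i : ℕ) : ℝ := Real.log (i + 1)

/-- Σ_{i=2}^{j} b_i -/
def sumB (j : ℕ) : ℝ := ∑ i ∈ Finset.Icc 2 j, bI i

/-- a₁ = Σ_{i=2}^{j} b_i -/
def a1 (j : ℕ) : ℝ := sumB j

/-- a₀ = a₁ + a₁²/(2 log 2) + b₂ + b_j − b_{j+1}/2 − b_{j−1}/2 -/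
def a0 (j : ℕ) : ℝ :=
  a1 j + (a1 j) ^ 2 / (2 * Real.log 2) + bI 2 + bI j - bI (j + 1) / 2 - bI (j - 1) / 2

/-- r_j = (b_j − b_{j+1}/2 − b_{j−1}/2)/(a₀ + 2Σ_{i=2}^{j} b_i) -/
def rJ (j : ℕ) : ℝ := (bI j - bI (j + 1) / 2 - bI (j - 1) / 2) / (a0 j + 2 * sumB j)

/-- c_j = (a₀/2 − Σ_{i=2}^{j} b_i)/(a₀/2 + Σ_{i=2}^{j} b_i) -/
def cJ (j : ℕ) : ℝ := (a0 j / 2 - sumB j) / (a0 j / 2 + sumB j)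

open Finset NormedSpace

lemma bI_nonneg (i : ℕ) : 0 ≤ bI i :=
  Real.log_nonneg (by norm_cast; omega)

lemma bI_one : bI 1 = Real.log 2 := by norm_num [bI]

def concavityDefect (m : ℕ) : ℝ := bI m - bI (m + 1) / 2 - bI (m - 1) / 2

lemma concavityDefect_eq {m : ℕ} (hm : 1 ≤ m) :
    concavityDefect m = Real.log (1 + 1 / (m * (m + 2))) / 2 := by
  have hm' : (0 : ℝ) < m := by exact_mod_cast hm
  have hsplit : 1 + 1 / ((m : ℝ) * (m + 2)) = (m + 1) ^ 2 / (m * (m + 2)) := by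
    field_simp
    ring
  rw [hsplit, Real.log_div (by positivity) (by positivity), Real.log_mul (by positivity)
    (by positivity), Real.log_pow]
  simp only [concavityDefect, bI, Nat.cast_sub hm]
  push_cast
  ring_nf

lemma concavityDefect_pos {m : ℕ} (hm : 1 ≤ m) : 0 < concavityDefect m := by
  have hm' : (0 : ℝ) < m := by exact_mod_cast hm
  rw [concavityDefect_eq hm]
  have := Real.log_pos (lt_add_of_pos_right 1 (by positivity : 0 < 1 / ((m : ℝ) * (m + 2))))
  positivity

lemma concavityDefect_le_of_le {m m' : ℕ} (hm : 1 ≤ m) (h : m ≤ m') :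
    concavityDefect m' ≤ concavityDefect m := by
  have hm' : (0 : ℝ) < m := by exact_mod_cast hm
  have h' : (m : ℝ) ≤ m' := by exact_mod_cast h
  rw [concavityDefect_eq hm, concavityDefect_eq (hm.trans h)]
  gcongr

lemma sumB_eq_sum_range (j : ℕ) : sumB j = ∑ k ∈ range (j - 1), bI (k + 2) := by
  rw [sumB, ← Ico_add_one_right_eq_Icc, sum_Ico_eq_sum_range, show j + 1 - 2 = j - 1 by omega]
  simp only [add_comm]

lemma sumB_nonneg (j : ℕ) : 0 ≤ sumB j := sum_nonneg fun i _ => bI_nonneg i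

lemma a0_eq (j : ℕ) :
    a0 j = sumB j + sumB j ^ 2 / (2 * Real.log 2) + bI 2 + concavityDefect j := by
  rw [a0, a1, concavityDefect]
  ring

lemma sumB_lt_half_a0 {j : ℕ} (hj : 1 ≤ j) : sumB j < a0 j / 2 := by
  have hL : 0 < Real.log 2 := Real.log_pos one_lt_two
  have hb2 : Real.log 2 ≤ bI 2 := Real.log_le_log two_pos (by norm_num)
  have hsq : (sumB j - Real.log 2) ^ 2 / (2 * Real.log 2)
      = sumB j ^ 2 / (2 * Real.log 2) - sumB j + Real.log 2 / 2 := by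
    field_simp
    ring
  -- `a₀ − 2S = (S − log 2)² / (2 log 2) + (b₂ − log 2 / 2) + ρ`
  have := div_nonneg (sq_nonneg (sumB j - Real.log 2)) (by positivity : 0 ≤ 2 * Real.log 2)
  linarith [a0_eq j, concavityDefect_pos hj]

lemma rJ_pos {j : ℕ} (hj : 1 ≤ j) : 0 < rJ j :=
  div_pos (concavityDefect_pos hj) (by linarith [sumB_lt_half_a0 hj, sumB_nonneg j])

lemma rJ_mul {j : ℕ} (hj : 1 ≤ j) : rJ j * (a0 j / 2 + sumB j) = concavityDefect j / 2 := by
  have : a0 j + 2 * sumB j ≠ 0 := by linarith [sumB_lt_half_a0 hj, sumB_nonneg j]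
  rw [rJ, ← concavityDefect]
  field_simp

lemma cJ_mul {j : ℕ} (hj : 1 ≤ j) : cJ j * (a0 j / 2 + sumB j) = a0 j / 2 - sumB j :=
  div_mul_cancel₀ _ (by linarith [sumB_lt_half_a0 hj, sumB_nonneg j])

def sqNorm (j : ℕ) (u : ℕ → ℝ) : ℝ := ∑ k ∈ range j, u k ^ 2

def chainSum (p : ℕ) (u : ℕ → ℝ) : ℝ := ∑ k ∈ range p, u k * u (k + 1)

/-- `Σ_{m=2}^{j} b_m Σ_{k<m-1} u_k u_{k+1}`, i.e. `u_k u_{k+1}` has weight `Σ_{m=k+2}^{j} b_m`.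
Written through chain sums, its derivative along the flow telescopes. -/
def crossForm (j : ℕ) (u : ℕ → ℝ) : ℝ :=
  ∑ k ∈ range (j - 1), bI (k + 2) * chainSum (k + 1) u

def lyap (j : ℕ) (u : ℕ → ℝ) : ℝ := a0 j / 2 * sqNorm j u - crossForm j u

def lyapDeriv (j : ℕ) (u : ℕ → ℝ) : ℝ :=
  a0 j * u 0 ^ 2 -
    ∑ k ∈ range (j - 1), bI (k + 2) * (u 0 ^ 2 + u 0 * u 1 - u (k + 1) ^ 2 - u k * u (k + 2))

lemma sqNorm_nonneg (j : ℕ) (u : ℕ → ℝ) : 0 ≤ sqNorm j u :=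
  sum_nonneg fun _ _ => sq_nonneg _

lemma sqNorm_mono {p j : ℕ} (h : p ≤ j) (u : ℕ → ℝ) : sqNorm p u ≤ sqNorm j u :=
  sum_le_sum_of_subset_of_nonneg (range_subset_range.2 h) fun _ _ _ => sq_nonneg _

lemma abs_chainSum_le {p j : ℕ} (h : p < j) (u : ℕ → ℝ) : |chainSum p u| ≤ sqNorm j u := by
  have hshift : ∑ k ∈ range p, u (k + 1) ^ 2 ≤ sqNorm j u := by
    calc ∑ k ∈ range p, u (k + 1) ^ 2 ≤ sqNorm (p + 1) u := by
          rw [sqNorm, sum_range_succ']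
          exact le_add_of_nonneg_right (sq_nonneg _)
      _ ≤ sqNorm j u := sqNorm_mono h u
  apply abs_le_of_sq_le_sq _ (sqNorm_nonneg j u)
  calc chainSum p u ^ 2 ≤ sqNorm p u * ∑ k ∈ range p, u (k + 1) ^ 2 :=
        sum_mul_sq_le_sq_mul_sq _ _ _
    _ ≤ sqNorm j u * sqNorm j u :=
        mul_le_mul (sqNorm_mono h.le u) hshift (sum_nonneg fun _ _ => sq_nonneg _)
          (sqNorm_nonneg j u)
    _ = sqNorm j u ^ 2 := (sq _).symm

lemma abs_crossForm_le (j : ℕ) (u : ℕ → ℝ) : |crossForm j u| ≤ sumB j * sqNorm j u := by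
  rw [sumB_eq_sum_range, sum_mul]
  refine (abs_sum_le_sum_abs _ _).trans (sum_le_sum fun k hk => ?_)
  rw [abs_mul, abs_of_nonneg (bI_nonneg _)]
  exact mul_le_mul_of_nonneg_left (abs_chainSum_le (by grind) u) (bI_nonneg _)

lemma lyap_le (j : ℕ) (u : ℕ → ℝ) : lyap j u ≤ (a0 j / 2 + sumB j) * sqNorm j u := by
  have := neg_le_of_abs_le (abs_crossForm_le j u)
  rw [lyap]
  linarith

lemma le_lyap (j : ℕ) (u : ℕ → ℝ) : (a0 j / 2 - sumB j) * sqNorm j u ≤ lyap j u := by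
  have := le_of_abs_le (abs_crossForm_le j u)
  rw [lyap]
  linarith

/- At `k = 0` the truncated index `k - 1` is `0`; this is how the identities below see the
entry of `E₁₁`. -/
lemma sum_mul_sub_shift (u : ℕ → ℝ) (n : ℕ) :
    ∑ k ∈ range n, u k * (u (k - 1) - u (k + 1)) = u 0 ^ 2 - u (n - 1) * u n := by
  convert sum_range_sub (fun k => -(u (k - 1) * u k)) n using 1
  · exact sum_congr rfl fun k _ => by simp only [Nat.add_sub_cancel]; ring
  · simp only [Nat.zero_sub]; ring

lemma sum_chain_deriv (u : ℕ → ℝ) (p : ℕ) :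
    ∑ k ∈ range p, ((u (k - 1) - u (k + 1)) * u (k + 1) + u k * (u k - u (k + 2)))
      = u 0 ^ 2 + u 0 * u 1 - u p ^ 2 - u (p - 1) * u (p + 1) := by
  convert sum_range_sub (fun k => -(u k ^ 2 + u (k - 1) * u (k + 1))) p using 1
  · exact sum_congr rfl fun k _ => by simp only [Nat.add_sub_cancel]; ring
  · simp only [Nat.zero_sub]; ring

lemma concavityDefect_mul_sqNorm_le_lyapDeriv {j : ℕ} (hj : 1 ≤ j) {u : ℕ → ℝ}
    (hu : u j = 0) :
    concavityDefect j * sqNorm j u ≤ lyapDeriv j u := by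
  obtain ⟨p, rfl⟩ := Nat.exists_eq_add_of_le' hj
  set L := Real.log 2 with hLdef
  set S := sumB (p + 1) with hSdef
  set ρ := concavityDefect (p + 1) with hρdef
  set F : ℕ → ℝ := fun k => bI (k + 2) / 2 * u k ^ 2
  set G : ℕ → ℝ := fun k => bI (k + 1) / 2 * u (k + 1) ^ 2
  -- AM-GM on `b_{k+2} u_k u_{k+2}`; the two halves it costs telescope over `k`.
  have hterm : ∀ k ∈ range p, ρ * u (k + 1) ^ 2 ≤
      bI (k + 2) * (u (k + 1) ^ 2 + u k * u (k + 2)) + (F k - F (k + 1)) + (G (k + 1) - G k) := by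
    intro k hk
    have hρ : ρ ≤ concavityDefect (k + 2) := concavityDefect_le_of_le (by omega) (by grind)
    simp only [F, G, concavityDefect, show k + 2 - 1 = k + 1 from rfl,
      show k + 1 + 2 = k + 2 + 1 from rfl, show k + 1 + 1 = k + 2 from rfl] at hρ ⊢
    nlinarith [mul_nonneg (bI_nonneg (k + 2)) (sq_nonneg (u k + u (k + 2))),
      mul_le_mul_of_nonneg_right hρ (sq_nonneg (u (k + 1)))]
  have hsum := sum_le_sum hterm
  rw [sum_add_distrib, sum_add_distrib, sum_range_sub', sum_range_sub, ← mul_sum] at hsum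
  have hN : sqNorm (p + 1) u = u 0 ^ 2 + ∑ k ∈ range p, u (k + 1) ^ 2 := by
    rw [sqNorm, sum_range_succ', add_comm]
  have hD : lyapDeriv (p + 1) u = a0 (p + 1) * u 0 ^ 2 - S * (u 0 ^ 2 + u 0 * u 1)
      + ∑ k ∈ range p, bI (k + 2) * (u (k + 1) ^ 2 + u k * u (k + 2)) := by
    rw [lyapDeriv, show S = _ from sumB_eq_sum_range _, Nat.add_sub_cancel, sum_mul, sub_add,
      ← sum_sub_distrib]
    exact congrArg _ (sum_congr rfl fun k _ => by ring)
  have hL : 0 < L := Real.log_pos one_lt_two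
  -- this square is where the term `S² / (2 log 2)` of `a₀` comes from
  have hcross : (S * u 0 - L * u 1) ^ 2 / (2 * L)
      = S ^ 2 / (2 * L) * u 0 ^ 2 - S * (u 0 * u 1) + L / 2 * u 1 ^ 2 := by
    field_simp
    ring
  have hG0 : G 0 = L / 2 * u 1 ^ 2 := by simp only [G, zero_add, bI_one, L]
  have hF0 : F 0 = bI 2 / 2 * u 0 ^ 2 := rfl
  have hGp : G p = 0 := by simp only [G, hu]; ring
  have hFp : 0 ≤ F p := by have := bI_nonneg (p + 2); positivity
  have := div_nonneg (sq_nonneg (S * u 0 - L * u 1)) (by positivity : 0 ≤ 2 * L)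
  have := mul_nonneg (bI_nonneg 2) (sq_nonneg (u 0))
  rw [hN, hD, a0_eq, ← hSdef, ← hLdef, ← hρdef]
  linarith

lemma rJ_mul_lyap_le_lyapDeriv {j : ℕ} (hj : 1 ≤ j) {u : ℕ → ℝ} (hu : u j = 0) :
    rJ j * lyap j u ≤ lyapDeriv j u :=
  calc rJ j * lyap j u ≤ rJ j * ((a0 j / 2 + sumB j) * sqNorm j u) :=
        mul_le_mul_of_nonneg_left (lyap_le j u) (rJ_pos hj).le
    _ = concavityDefect j / 2 * sqNorm j u := by rw [← mul_assoc, rJ_mul hj]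
    _ ≤ concavityDefect j * sqNorm j u := by
        nlinarith [concavityDefect_pos hj, sqNorm_nonneg j u]
    _ ≤ lyapDeriv j u := concavityDefect_mul_sqNorm_le_lyapDeriv hj hu

section Derivatives

variable {u : ℝ → ℕ → ℝ} {u' : ℕ → ℝ} {t : ℝ}

lemma hasDerivAt_sqNorm (hu : ∀ k, HasDerivAt (fun s => u s k) (u' k) t) (j : ℕ) :
    HasDerivAt (fun s => sqNorm j (u s)) (2 * ∑ k ∈ range j, u t k * u' k) t := by
  rw [mul_sum]
  exact HasDerivAt.fun_sum fun k _ => ((hu k).pow 2).congr_deriv (by ring)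

lemma hasDerivAt_chainSum (hu : ∀ k, HasDerivAt (fun s => u s k) (u' k) t) (p : ℕ) :
    HasDerivAt (fun s => chainSum p (u s))
      (∑ k ∈ range p, (u' k * u t (k + 1) + u t k * u' (k + 1))) t :=
  HasDerivAt.fun_sum fun k _ => (hu k).mul (hu (k + 1))

lemma hasDerivAt_lyap {j : ℕ} (hu : ∀ k, HasDerivAt (fun s => u s k) (u' k) t)
    (hu' : ∀ k < j, u' k = u t (k - 1) - u t (k + 1)) (hj : u t j = 0) :
    HasDerivAt (fun s => lyap j (u s)) (lyapDeriv j (u t)) t := by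
  have hnorm := (hasDerivAt_sqNorm hu j).const_mul (a0 j / 2)
  have hcross : HasDerivAt (fun s => crossForm j (u s))
      (∑ k ∈ range (j - 1), bI (k + 2) *
        ∑ i ∈ range (k + 1), (u' i * u t (i + 1) + u t i * u' (i + 1))) t :=
    HasDerivAt.fun_sum fun k _ => (hasDerivAt_chainSum hu (k + 1)).const_mul _
  refine (hnorm.sub hcross).congr_deriv ?_
  have hsq : ∑ k ∈ range j, u t k * u' k = u t 0 ^ 2 := by
    rw [sum_congr rfl fun k hk => by rw [hu' k (mem_range.1 hk)], sum_mul_sub_shift, hj, mul_zero,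
      sub_zero]
  have hchain : ∀ k ∈ range (j - 1),
      ∑ i ∈ range (k + 1), (u' i * u t (i + 1) + u t i * u' (i + 1))
        = u t 0 ^ 2 + u t 0 * u t 1 - u t (k + 1) ^ 2 - u t k * u t (k + 2) := by
    intro k hk
    have hsum := sum_chain_deriv (u t) (k + 1)
    rw [Nat.add_sub_cancel] at hsum
    rw [← hsum]
    refine sum_congr rfl fun i hi => ?_
    have := mem_range.1 hk
    have := mem_range.1 hi
    rw [hu' i (by omega), hu' (i + 1) (by omega), Nat.add_sub_cancel]
  rw [hsq, sum_congr rfl fun k hk => by rw [hchain k hk], lyapDeriv]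
  ring

end Derivatives

lemma exp_mul_le_of_mul_le_deriv {V V' : ℝ → ℝ} {r : ℝ} (hV : ∀ t, HasDerivAt V (V' t) t)
    (h : ∀ t, r * V t ≤ V' t) {t : ℝ} (ht : 0 ≤ t) : Real.exp (r * t) * V 0 ≤ V t := by
  have hderiv : ∀ s, HasDerivAt (fun s => Real.exp (-r * s) * V s)
      (Real.exp (-r * s) * (V' s - r * V s)) s := fun s =>
    (((hasDerivAt_id s).const_mul (-r)).exp.mul (hV s)).congr_deriv (by simp only [id]; ring)
  have hmono := monotone_of_hasDerivAt_nonneg hderiv fun s =>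
    mul_nonneg (Real.exp_pos _).le (sub_nonneg.2 (h s))
  have := mul_le_mul_of_nonneg_left (hmono ht) (Real.exp_pos (r * t)).le
  simpa [← mul_assoc, ← Real.exp_add] using this

def extendByZero {j : ℕ} (w : Fin j → ℝ) (k : ℕ) : ℝ := if h : k < j then w ⟨k, h⟩ else 0

section ExtendByZero

variable {j : ℕ}

lemma extendByZero_of_lt (w : Fin j → ℝ) {k : ℕ} (h : k < j) : extendByZero w k = w ⟨k, h⟩ :=
  dif_pos h

lemma extendByZero_self (w : Fin j → ℝ) : extendByZero w j = 0 := dif_neg (lt_irrefl j)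

lemma dotProduct_self_eq_sqNorm (w : Fin j → ℝ) : w ⬝ᵥ w = sqNorm j (extendByZero w) := by
  rw [sqNorm, ← Fin.sum_univ_eq_sum_range (fun k => extendByZero w k ^ 2)]
  exact sum_congr rfl fun k _ => by rw [extendByZero_of_lt w k.isLt, sq]

lemma sum_ite_val_eq (w : Fin j → ℝ) (i : ℕ) :
    ∑ m : Fin j, (if (m : ℕ) = i then w m else 0) = extendByZero w i := by
  by_cases h : i < j
  · simp only [extendByZero_of_lt w h, ← Fin.ext_iff (b := ⟨i, h⟩), sum_ite_eq', mem_univ, if_true]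
  · simp only [extendByZero, dif_neg h]
    exact sum_eq_zero fun m _ => if_neg (by omega)

lemma hasDerivAt_extendByZero {y : ℝ → Fin j → ℝ} {y' : Fin j → ℝ} {t : ℝ}
    (hy : HasDerivAt y y' t) (k : ℕ) :
    HasDerivAt (fun s => extendByZero (y s) k) (extendByZero y' k) t := by
  by_cases hk : k < j
  · simp only [extendByZero, dif_pos hk]
    exact hasDerivAt_pi.1 hy _
  · simp only [extendByZero, dif_neg hk]
    exact hasDerivAt_const _ _

end ExtendByZero

lemma e11_add_triJ_apply (j : ℕ) (k m : Fin j) :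
    (e11 j + triJ j) k m
      = (if (m : ℕ) = k - 1 then 1 else 0) - (if (m : ℕ) = k + 1 then 1 else 0) := by
  simp only [Matrix.add_apply, e11, triJ, of_apply]
  split_ifs <;> first | ring1 | (exfalso; omega)

lemma extendByZero_e11_add_triJ_mulVec {j : ℕ} (w : Fin j → ℝ) {k : ℕ} (hk : k < j) :
    extendByZero ((e11 j + triJ j) *ᵥ w) k = extendByZero w (k - 1) - extendByZero w (k + 1) := by
  rw [extendByZero_of_lt _ hk]
  simp only [mulVec, dotProduct, e11_add_triJ_apply, sub_mul, ite_mul, one_mul, zero_mul,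
    sum_sub_distrib, sum_ite_val_eq]

lemma triJ_transpose (j : ℕ) : (triJ j)ᵀ = -triJ j := by
  ext i m
  simp only [transpose_apply, Matrix.neg_apply, triJ, of_apply]
  split_ifs <;> first | ring1 | (exfalso; omega)

lemma e11_transpose (j : ℕ) : (e11 j)ᵀ = e11 j := by
  ext i m
  simp only [transpose_apply, e11, of_apply, and_comm]

lemma hasDerivAt_exp_smul_mulVec {ι : Type*} [Fintype ι] [DecidableEq ι] (A : Matrix ι ι ℝ)
    (x : ι → ℝ) (t : ℝ) :
    HasDerivAt (fun s : ℝ => exp (s • A) *ᵥ x) (A *ᵥ (exp (t • A) *ᵥ x)) t := by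
  let _ : NormedRing (Matrix ι ι ℝ) := Matrix.linftyOpNormedRing
  let _ : NormedAlgebra ℝ (Matrix ι ι ℝ) := Matrix.linftyOpNormedAlgebra
  let L : Matrix ι ι ℝ →L[ℝ] ι → ℝ := LinearMap.toContinuousLinearMap
    { toFun := (· *ᵥ x)
      map_add' := fun A B => add_mulVec A B x
      map_smul' := fun c A => smul_mulVec c A x }
  rw [mulVec_mulVec]
  exact L.hasFDerivAt.comp_hasDerivAt t (hasDerivAt_exp_smul_const' A t)

lemma exp_mul_lyap_le_lyap_exp_smul {j : ℕ} (hj : 1 ≤ j) (x : Fin j → ℝ) {t : ℝ} (ht : 0 ≤ t) :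
    Real.exp (rJ j * t) * lyap j (extendByZero x)
      ≤ lyap j (extendByZero (exp (t • (e11 j + triJ j)) *ᵥ x)) := by
  have hflow : ∀ s, HasDerivAt (fun s => lyap j (extendByZero (exp (s • (e11 j + triJ j)) *ᵥ x)))
      (lyapDeriv j (extendByZero (exp (s • (e11 j + triJ j)) *ᵥ x))) s := fun s =>
    hasDerivAt_lyap (fun k => hasDerivAt_extendByZero (hasDerivAt_exp_smul_mulVec _ x s) k)
      (fun k hk => extendByZero_e11_add_triJ_mulVec _ hk) (extendByZero_self _)
  simpa using exp_mul_le_of_mul_le_deriv hflow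
    (fun s => rJ_mul_lyap_le_lyapDeriv hj (extendByZero_self _)) ht

lemma cJ_mul_exp_mul_dotProduct_le {j : ℕ} (hj : 1 ≤ j) (x : Fin j → ℝ) {t : ℝ} (ht : 0 ≤ t) :
    cJ j * Real.exp (rJ j * t) * (x ⬝ᵥ x)
      ≤ (exp (t • (e11 j + triJ j)) *ᵥ x) ⬝ᵥ (exp (t • (e11 j + triJ j)) *ᵥ x) := by
  have hpos : 0 < a0 j / 2 + sumB j := by linarith [sumB_lt_half_a0 hj, sumB_nonneg j]
  rw [dotProduct_self_eq_sqNorm, dotProduct_self_eq_sqNorm, ← mul_le_mul_iff_of_pos_left hpos]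
  calc (a0 j / 2 + sumB j) * (cJ j * Real.exp (rJ j * t) * sqNorm j (extendByZero x))
      = Real.exp (rJ j * t) * ((a0 j / 2 - sumB j) * sqNorm j (extendByZero x)) := by
        rw [← cJ_mul hj]
        ring
    _ ≤ Real.exp (rJ j * t) * lyap j (extendByZero x) := by
        gcongr
        exact le_lyap j _
    _ ≤ lyap j (extendByZero (exp (t • (e11 j + triJ j)) *ᵥ x)) :=
        exp_mul_lyap_le_lyap_exp_smul hj x ht
    _ ≤ _ := lyap_le j _

lemma integral_exp_mul (c N r t : ℝ) (hr : r ≠ 0) :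
    ∫ v in (0 : ℝ)..t, c * Real.exp (r * v) * N = N * (c / r) * (Real.exp (r * t) - 1) := by
  simp only [intervalIntegral.integral_mul_const, intervalIntegral.integral_const_mul,
    intervalIntegral.integral_comp_mul_left (Real.exp) hr, integral_exp, mul_zero, Real.exp_zero,
    smul_eq_mul]
  field_simp

lemma le_integral_of_exp_mul_le {f : ℝ → ℝ} (hf : Continuous f) {c N r t : ℝ} (hr : r ≠ 0)
    (ht : 0 ≤ t) (h : ∀ v ∈ Set.Icc 0 t, c * Real.exp (r * v) * N ≤ f v) :
    N * (c / r) * (Real.exp (r * t) - 1) ≤ ∫ v in (0 : ℝ)..t, f v := by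
  rw [← integral_exp_mul c N r t hr]
  exact intervalIntegral.integral_mono_on ht
    (Continuous.intervalIntegrable (by fun_prop) 0 t) (hf.intervalIntegrable 0 t) h

/-- oscillators with damping, instability of the time-reversed flow: with
M = E₁₁ + Tri_j(1,0,−1), for every x ∈ ℝʲ and t ≥ 0 one has ‖e^{tM}x‖² ≥ c_j e^{r_j t}‖x‖²,
and consequently, with A̲ = Tri_j(1,0,−1) − E₁₁,
∫₀ᵗ ‖e^{−v A̲ᵀ}x‖² dv ≥ ‖x‖² (c_j/r_j)(e^{r_j t} − 1). -/
theorem stmt_19 (j : ℕ) (hj : 3 ≤ j) (x : Fin j → ℝ) (t : ℝ) (ht : 0 ≤ t) :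
    (NormedSpace.exp (t • (e11 j + triJ j)) *ᵥ x) ⬝ᵥ
        (NormedSpace.exp (t • (e11 j + triJ j)) *ᵥ x)
      ≥ cJ j * Real.exp (rJ j * t) * (x ⬝ᵥ x) ∧
    ∫ v in (0:ℝ)..t,
        (NormedSpace.exp ((-v) • (triJ j - e11 j)ᵀ) *ᵥ x) ⬝ᵥ
          (NormedSpace.exp ((-v) • (triJ j - e11 j)ᵀ) *ᵥ x)
      ≥ (x ⬝ᵥ x) * (cJ j / rJ j) * (Real.exp (rJ j * t) - 1) := by
  have hj1 : 1 ≤ j := by omega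
  have htranspose : ∀ v : ℝ, (-v) • (triJ j - e11 j)ᵀ = v • (e11 j + triJ j) := fun v => by
    rw [transpose_sub, triJ_transpose, e11_transpose, neg_smul, ← smul_neg]
    abel_nf
  have hcont : Continuous fun v : ℝ =>
      (exp (v • (e11 j + triJ j)) *ᵥ x) ⬝ᵥ (exp (v • (e11 j + triJ j)) *ᵥ x) := by
    have hflow : Continuous fun v : ℝ => exp (v • (e11 j + triJ j)) *ᵥ x :=
      continuous_iff_continuousAt.2 fun v => (hasDerivAt_exp_smul_mulVec _ x v).continuousAt
    exact hflow.dotProduct hflow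
  refine ⟨cJ_mul_exp_mul_dotProduct_le hj1 x ht, ?_⟩
  simp only [htranspose]
  exact le_integral_of_exp_mul_le hcont (rJ_pos hj1).ne' ht fun v hv =>
    cJ_mul_exp_mul_dotProduct_le hj1 x hv.1
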